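/- arXiv:1505.06633 — 2 statements merged into one kernel-verified Lean document; each statement's English description precedes it below -/
import Mathlib

section
/- Let μ be a Borel probability measure on the circle 𝕋 that is invariant under both T_p(z) = z^p and T_q(z) = z^q, where p, q ≥ 2. Define ν̂ : ℤ[1/(pq)] → ℂ by ν̂(k·p^{-m}·q^{-n}) = μ̂(k) for integers k, m, n ≥ 0, where μ̂(k) = ∫ z^k dμ is the k-th Fourier coefficient of μ. Then ν̂ is well-defined and is a positive definite function on the group ℤ[1/(pq)]: for every finite family (λ_s)_{s∈F} of complex numbers indexed by a finite subset F ⊆ ℤ[1/(pq)], the sum ∑_{s,t∈F} conj(λ_s) λ_t ν̂(t − s) is a nonnegative real number. -/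
/-!
Invariance under `z ↦ z ^ p` and `z ↦ z ^ q` makes `μ̂` constant along the orbits of
multiplication by `p` and `q`, so `k / (p ^ m * q ^ n) ↦ μ̂ k` factors through the fractions
and extends to a function `ν̂` on `ℚ`. Finitely many points of `ℤ[1/(pq)]` share a denominator
`p ^ M * q ^ N`, and on that lattice `ν̂` is just `μ̂`, which is positive definite because
`∑ conj (c s) * c t * μ̂ (a t - a s) = ∫ |∑ c t * z ^ a t|² dμ`.
-/

open MeasureTheory Complex ComplexConjugate ComplexOrder

section Monoid

variable {M : Type*} [Monoid M] [MeasurableSpace M] {μ : Measure M} {a b : ℕ}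

theorem measurePreserving_pow_mul (ha : MeasurePreserving (fun z : M => z ^ a) μ μ)
    (hb : MeasurePreserving (fun z : M => z ^ b) μ μ) :
    MeasurePreserving (fun z : M => z ^ (a * b)) μ μ := by
  simpa only [Function.comp_def, ← pow_mul'] using ha.comp hb

theorem measurePreserving_pow_pow (ha : MeasurePreserving (fun z : M => z ^ a) μ μ) (m : ℕ) :
    MeasurePreserving (fun z : M => z ^ (a ^ m)) μ μ := by
  induction m with
  | zero =>
    simp only [pow_zero, pow_one]
    exact MeasurePreserving.id μ
  | succ m ih => simpa only [pow_succ] using measurePreserving_pow_mul ih ha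

end Monoid

def pqFraction (p q : ℕ) (x : ℤ × ℕ × ℕ) : ℚ :=
  x.1 / (p ^ x.2.1 * q ^ x.2.2)

section pqFraction

variable {p q : ℕ}

theorem pqFraction_sub (j k : ℤ) (m n : ℕ) :
    pqFraction p q (j, m, n) - pqFraction p q (k, m, n) = pqFraction p q (j - k, m, n) := by
  simp only [pqFraction]
  push_cast
  ring

variable (hp : p ≠ 0) (hq : q ≠ 0)
include hp hq

theorem mul_eq_mul_of_pqFraction_eq {j k : ℤ} {m n m' n' : ℕ}
    (h : pqFraction p q (j, m, n) = pqFraction p q (k, m', n')) :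
    j * (p ^ m' * q ^ n') = k * (p ^ m * q ^ n) := by
  rw [pqFraction, pqFraction, div_eq_div_iff (by positivity) (by positivity)] at h
  exact_mod_cast h

theorem pqFraction_eq_of_le (k : ℤ) {m n M N : ℕ} (hm : m ≤ M) (hn : n ≤ N) :
    pqFraction p q (k, m, n) = pqFraction p q (k * p ^ (M - m) * q ^ (N - n), M, N) := by
  obtain ⟨i, rfl⟩ := Nat.exists_eq_add_of_le hm
  obtain ⟨j, rfl⟩ := Nat.exists_eq_add_of_le hn
  simp only [pqFraction, Nat.add_sub_cancel_left]
  rw [div_eq_div_iff (by positivity) (by positivity)]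
  push_cast
  ring

theorem exists_common_denom_pqFraction {F : Finset ℚ}
    (hF : ∀ s ∈ F, ∃ (k : ℤ) (m n : ℕ), s = pqFraction p q (k, m, n)) :
    ∃ (M N : ℕ) (a : ℚ → ℤ), ∀ s ∈ F, pqFraction p q (a s, M, N) = s := by
  choose! k m n hk using hF
  refine ⟨F.sup m, F.sup n, fun s => k s * p ^ (F.sup m - m s) * q ^ (F.sup n - n s),
    fun s hs => ?_⟩
  rw [← pqFraction_eq_of_le hp hq _ (Finset.le_sup hs) (Finset.le_sup hs)]
  exact (hk s hs).symm

end pqFraction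

noncomputable def circleFourierCoeff [MeasurableSpace Circle] (μ : Measure Circle) (k : ℤ) :
    ℂ :=
  ∫ z : Circle, (z : ℂ) ^ k ∂μ

theorem Circle.continuous_coe_zpow (k : ℤ) : Continuous fun z : Circle => (z : ℂ) ^ k :=
  continuous_induced_dom.comp (continuous_zpow (G := Circle) k) |>.congr
    fun z => Circle.coe_zpow z k

section CircleFourierCoeff

variable [MeasurableSpace Circle] [OpensMeasurableSpace Circle] {μ : Measure Circle}

theorem circleFourierCoeff_natCast_mul {n : ℕ}
    (hn : MeasurePreserving (fun z : Circle => z ^ n) μ μ) (k : ℤ) :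
    circleFourierCoeff μ (n * k) = circleFourierCoeff μ k := by
  conv_rhs => rw [circleFourierCoeff, ← hn.map_eq,
    integral_map hn.aemeasurable (Circle.continuous_coe_zpow k).aestronglyMeasurable]
  simp only [circleFourierCoeff, ← zpow_natCast, Circle.coe_zpow, ← zpow_mul]

theorem circleFourierCoeff_eq_of_mul_eq {p q : ℕ}
    (hp : MeasurePreserving (fun z : Circle => z ^ p) μ μ)
    (hq : MeasurePreserving (fun z : Circle => z ^ q) μ μ)
    {j k : ℤ} {m n m' n' : ℕ} (h : j * (p ^ m' * q ^ n') = k * (p ^ m * q ^ n)) :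
    circleFourierCoeff μ j = circleFourierCoeff μ k := by
  have invariant : ∀ (m n : ℕ) (k : ℤ),
      circleFourierCoeff μ ((p ^ m * q ^ n : ℕ) * k) = circleFourierCoeff μ k := fun m n =>
    circleFourierCoeff_natCast_mul
      (measurePreserving_pow_mul (measurePreserving_pow_pow hp m) (measurePreserving_pow_pow hq n))
  rw [← invariant m' n' j, ← invariant m n k]
  push_cast
  rw [mul_comm, h, mul_comm]

theorem circleFourierCoeff_sum_eq_integral_normSq [IsFiniteMeasure μ] {ι : Type*}
    (F : Finset ι) (c : ι → ℂ) (a : ι → ℤ) :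
    ∑ s ∈ F, ∑ t ∈ F, conj (c s) * c t * circleFourierCoeff μ (a t - a s) =
      ∫ z : Circle, normSq (∑ t ∈ F, c t * (z : ℂ) ^ a t) ∂μ := by
  have integrable (s t : ι) :
      Integrable (fun z : Circle => conj (c s) * c t * (z : ℂ) ^ (a t - a s)) μ :=
    ((Circle.continuous_coe_zpow _).integrable_of_hasCompactSupport
      (HasCompactSupport.of_compactSpace _)).const_mul _
  have pointwise (z : Circle) :
      ∑ s ∈ F, ∑ t ∈ F, conj (c s) * c t * (z : ℂ) ^ (a t - a s) =
        normSq (∑ t ∈ F, c t * (z : ℂ) ^ a t) := by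
    rw [normSq_eq_conj_mul_self, map_sum, Finset.sum_mul_sum]
    refine Finset.sum_congr rfl fun s _ => Finset.sum_congr rfl fun t _ => ?_
    rw [zpow_sub₀ (Circle.coe_ne_zero z), map_mul, map_zpow₀, ← Circle.coe_inv_eq_conj,
      Circle.coe_inv, inv_zpow]
    ring
  calc _ = ∫ z : Circle, ∑ s ∈ F, ∑ t ∈ F, conj (c s) * c t * (z : ℂ) ^ (a t - a s) ∂μ := by
        rw [integral_finsetSum _ fun s _ => integrable_finsetSum _ fun t _ => integrable s t]
        refine Finset.sum_congr rfl fun s _ => ?_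
        rw [integral_finsetSum _ fun t _ => integrable s t]
        simp only [circleFourierCoeff, integral_const_mul]
    _ = ∫ z : Circle, (normSq (∑ t ∈ F, c t * (z : ℂ) ^ a t) : ℂ) ∂μ :=
        integral_congr_ae (Filter.Eventually.of_forall pointwise)
    _ = _ := integral_ofReal

theorem zero_le_sum_conj_mul_circleFourierCoeff [IsFiniteMeasure μ] {ι : Type*}
    (F : Finset ι) (c : ι → ℂ) (a : ι → ℤ) :
    0 ≤ ∑ s ∈ F, ∑ t ∈ F, conj (c s) * c t * circleFourierCoeff μ (a t - a s) := by
  rw [circleFourierCoeff_sum_eq_integral_normSq, zero_le_real]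
  exact integral_nonneg fun z => normSq_nonneg _

end CircleFourierCoeff

theorem circleFourierCoeff_factorsThrough_pqFraction [MeasurableSpace Circle]
    [OpensMeasurableSpace Circle] {μ : Measure Circle} {p q : ℕ} (hp : p ≠ 0) (hq : q ≠ 0)
    (hμp : MeasurePreserving (fun z : Circle => z ^ p) μ μ)
    (hμq : MeasurePreserving (fun z : Circle => z ^ q) μ μ) :
    (fun x : ℤ × ℕ × ℕ => circleFourierCoeff μ x.1).FactorsThrough (pqFraction p q) :=
  fun _ _ h => circleFourierCoeff_eq_of_mul_eq hμp hμq (mul_eq_mul_of_pqFraction_eq hp hq h)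

/-- for a ×p,×q-invariant Borel probability measure μ on the circle,
the assignment ν̂(k·p^{-m}·q^{-n}) = μ̂(k) is a well-defined positive definite
function on the group ℤ[1/(pq)] ⊆ ℚ. -/
theorem stmt11 (p q : ℕ) (hp : 2 ≤ p) (hq : 2 ≤ q)
    [MeasurableSpace Circle] [BorelSpace Circle]
    (μ : Measure Circle) [IsProbabilityMeasure μ]
    (hμp : MeasurePreserving (fun z : Circle => z ^ p) μ μ)
    (hμq : MeasurePreserving (fun z : Circle => z ^ q) μ μ) :
    ∃ ν : ℚ → ℂ,
      (∀ (k : ℤ) (m n : ℕ),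
        ν ((k : ℚ) / ((p : ℚ) ^ m * (q : ℚ) ^ n)) = ∫ z : Circle, (z : ℂ) ^ k ∂μ) ∧
      ∀ F : Finset ℚ,
        (↑F : Set ℚ) ⊆ {x : ℚ | ∃ (k : ℤ) (m n : ℕ), x = (k : ℚ) / ((p : ℚ) ^ m * (q : ℚ) ^ n)} →
        ∀ lam : ℚ → ℂ,
          0 ≤ (∑ s ∈ F, ∑ t ∈ F, (starRingEnd ℂ) (lam s) * lam t * ν (t - s)).re ∧
          (∑ s ∈ F, ∑ t ∈ F, (starRingEnd ℂ) (lam s) * lam t * ν (t - s)).im = 0 := by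
  have hp0 : p ≠ 0 := by omega
  have hq0 : q ≠ 0 := by omega
  set ν := Function.extend (pqFraction p q) (fun x => circleFourierCoeff μ x.1) 0
  have hν (x : ℤ × ℕ × ℕ) : ν (pqFraction p q x) = circleFourierCoeff μ x.1 :=
    (circleFourierCoeff_factorsThrough_pqFraction hp0 hq0 hμp hμq).extend_apply 0 x
  refine ⟨ν, fun k m n => hν (k, m, n), fun F hF lam => ?_⟩
  obtain ⟨M, N, a, ha⟩ := exists_common_denom_pqFraction hp0 hq0 hF
  have hνF : ∀ s ∈ F, ∀ t ∈ F, ν (t - s) = circleFourierCoeff μ (a t - a s) := by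
    intro s hs t ht
    rw [← hν (a t - a s, M, N), ← pqFraction_sub, ha s hs, ha t ht]
  have hsum : ∑ s ∈ F, ∑ t ∈ F, conj (lam s) * lam t * ν (t - s) =
      ∑ s ∈ F, ∑ t ∈ F, conj (lam s) * lam t * circleFourierCoeff μ (a t - a s) :=
    Finset.sum_congr rfl fun s hs => Finset.sum_congr rfl fun t ht => by rw [hνF s hs t ht]
  obtain ⟨hre, him⟩ :=
    nonneg_iff.mp (zero_le_sum_conj_mul_circleFourierCoeff (μ := μ) F lam a)
  exact hsum ▸ ⟨hre, him.symm⟩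
end

section
/- Let H be a Hilbert space, U : ℤ² → U(H) a unitary representation, V a unitary on H satisfying U(m,n) V U(m,n)* = V^{p^m q^n} for all (m,n) ∈ ℤ² (interpreted for m,n ≥ 0), and y a unit vector fixed by every U(m,n). If V^{M p^i q^j} y = y for some nonnegative integers i, j and positive integer M, then V^M y = y. -/
/-- given a unitary representation U of ℤ² and a unitary V satisfying the
covariance relation U(i,j) V^k U(i,j)* = V^{k p^i q^j}, and a unit vector y fixed by all
U(m,n), if V^{M p^i q^j} y = y then V^M y = y. -/
theorem stmt14 {H : Type*} [NormedAddCommGroup H] [InnerProductSpace ℂ H]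
    [CompleteSpace H]
    (p q : ℕ) (hp : 2 ≤ p) (hq : 2 ≤ q)
    (V : H ≃ₗᵢ[ℂ] H)
    (U : ℤ × ℤ → (H ≃ₗᵢ[ℂ] H))
    (hUadd : ∀ a b : ℤ × ℤ, U (a + b) = U a * U b)
    (hcov : ∀ (k : ℤ) (i j : ℕ),
      U ((i : ℤ), (j : ℤ)) * V ^ k = V ^ (k * (p : ℤ) ^ i * (q : ℤ) ^ j) * U ((i : ℤ), (j : ℤ)))
    (y : H) (hy : ‖y‖ = 1) (hyfix : ∀ mn : ℤ × ℤ, U mn y = y)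
    (M : ℕ) (hM : 0 < M) (i j : ℕ)
    (h : (V ^ ((M : ℤ) * (p : ℤ) ^ i * (q : ℤ) ^ j)) y = y) :
    (V ^ (M : ℤ)) y = y := by
  have h1 : (U ((i : ℤ), (j : ℤ)) * V ^ (M : ℤ)) y
      = (V ^ ((M : ℤ) * (p : ℤ) ^ i * (q : ℤ) ^ j) * U ((i : ℤ), (j : ℤ))) y := by
    rw [hcov]
  simp only [LinearIsometryEquiv.coe_mul, Function.comp_apply] at h1
  rw [hyfix, h] at h1
  have := (U ((i : ℤ), (j : ℤ))).injective
  apply this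
  rw [h1, hyfix]
end
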